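/- arXiv:1312.2767 — 2 statements merged into one kernel-verified Lean document; each statement's English description precedes it below -/
import Mathlib

section
/- The polynomials F_n(x,q) satisfy F_n(x,q) = (x + (1-q)D_q) F_{n-1}(x,q) - F_{n-2}(x,q) for n ≥ 2, where D_q is the q-derivative operator. -/
/-!
Compare coefficients of `X ^ i`. The coefficient of `X ^ i` in `F_n` vanishes unless `n = 2k + i`,
in which case it is `(-1)^k q^(k(k+1)/2) [k+i choose k]_q`. The operator `X + (1 - q) D_q` sends
`X ^ m` to `X ^ (m+1) + (1 - q^m) X ^ (m-1)`, so the recurrence becomes a three-term identity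
between these coefficients, a rational identity in `q`-Pochhammer symbols (nonzero as `|q| ≠ 1`).
-/

/-- The q-Pochhammer symbol `(a;q)_n`. -/
noncomputable def qPoch (a q : ℝ) (n : ℕ) : ℝ := ∏ j ∈ Finset.range n, (1 - q ^ j * a)

/-- The Gaussian (q-)binomial coefficient `[n choose k]_q`. -/
noncomputable def qbinom (q : ℝ) (n k : ℕ) : ℝ :=
  qPoch q q n / (qPoch q q k * qPoch q q (n - k))

open Polynomial Finset

section qDeriv

variable {K : Type*} [Field K]

noncomputable def qDeriv (q : K) (p : K[X]) : K[X] :=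
  p.sum fun n a => C (a * ((1 - q ^ n) / (1 - q))) * X ^ (n - 1)

theorem coeff_qDeriv (q : K) (p : K[X]) (i : ℕ) :
    (qDeriv q p).coeff i = p.coeff (i + 1) * ((1 - q ^ (i + 1)) / (1 - q)) := by
  rw [qDeriv, Polynomial.sum_def, finsetSum_coeff]
  simp_rw [coeff_C_mul_X_pow]
  rw [Finset.sum_eq_single (i + 1)]
  · simp
  · intro n _ hn
    split_ifs with h
    -- `n = 0` also lands in degree `n - 1 = 0`, but carries the factor `1 - q ^ 0 = 0`
    · obtain rfl : n = 0 := by omega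
      simp
    · rfl
  · intro h
    simp [notMem_support_iff.1 h]

theorem coeff_C_one_sub_mul_qDeriv {q : K} (hq : q ≠ 1) (p : K[X]) (i : ℕ) :
    (C (1 - q) * qDeriv q p).coeff i = (1 - q ^ (i + 1)) * p.coeff (i + 1) := by
  rw [coeff_C_mul, coeff_qDeriv]
  field_simp [sub_ne_zero.2 hq.symm]

end qDeriv

theorem pow_succ_ne_one_of_abs_ne_one {q : ℝ} (hq : |q| ≠ 1) (n : ℕ) : q ^ (n + 1) ≠ 1 := by
  intro h
  apply hq
  rw [← pow_eq_one_iff_of_nonneg (abs_nonneg q) n.succ_ne_zero, ← abs_pow, h, abs_one]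

theorem qPoch_zero (a q : ℝ) : qPoch a q 0 = 1 := prod_range_zero _

theorem qPoch_self_succ (q : ℝ) (n : ℕ) :
    qPoch q q (n + 1) = qPoch q q n * (1 - q ^ (n + 1)) := by
  rw [qPoch, prod_range_succ, ← pow_succ, qPoch]

theorem qPoch_self_ne_zero {q : ℝ} (hq : |q| ≠ 1) (n : ℕ) : qPoch q q n ≠ 0 :=
  prod_ne_zero_iff.2 fun j _ => by
    rw [← pow_succ]
    exact sub_ne_zero.2 (pow_succ_ne_one_of_abs_ne_one hq j).symm

theorem qbinom_add_left (q : ℝ) (k i : ℕ) :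
    qbinom q (k + i) k = qPoch q q (k + i) / (qPoch q q k * qPoch q q i) := by
  rw [qbinom, Nat.add_sub_cancel_left]

/-- The coefficient of `X ^ i` in `F_(2k+i)`. Indexing by `(k, i)` rather than `(n, k)` keeps the
truncated subtraction `n - 2 * k` out of `qbinom`. -/
noncomputable def qFibCoeff (q : ℝ) (k i : ℕ) : ℝ :=
  q ^ (k * (k + 1) / 2) * qbinom q (k + i) k * (-1) ^ k

theorem succ_mul_succ_add_one_div_two (k : ℕ) :
    (k + 1) * (k + 1 + 1) / 2 = k * (k + 1) / 2 + (k + 1) := by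
  rw [show (k + 1) * (k + 1 + 1) = k * (k + 1) + (k + 1) * 2 by ring,
    Nat.add_mul_div_right _ _ two_pos]

theorem qFibCoeff_eq (q : ℝ) (k i : ℕ) : qFibCoeff q k i =
    (-1) ^ k * q ^ (k * (k + 1) / 2) * qPoch q q (k + i) / (qPoch q q k * qPoch q q i) := by
  rw [qFibCoeff, qbinom_add_left]
  ring

theorem qFibCoeff_zero_left {q : ℝ} (hq : |q| ≠ 1) (i : ℕ) : qFibCoeff q 0 i = 1 := by
  simp [qFibCoeff_eq, qPoch_zero, qPoch_self_ne_zero hq]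

theorem qFibCoeff_succ_zero {q : ℝ} (hq : |q| ≠ 1) (k : ℕ) :
    qFibCoeff q (k + 1) 0 = (1 - q) * qFibCoeff q k 1 - qFibCoeff q k 0 := by
  have h1 := fun n => sub_ne_zero.2 (pow_succ_ne_one_of_abs_ne_one hq n).symm
  simp only [qFibCoeff_eq, add_zero, succ_mul_succ_add_one_div_two, qPoch_zero]
  rw [qPoch_self_succ q k, qPoch_self_succ q 0, qPoch_zero, pow_add q _ (k + 1),
    pow_succ (-1 : ℝ) k]
  field_simp [qPoch_self_ne_zero hq k, h1 k, show 1 - q ≠ 0 by simpa using h1 0]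
  ring

theorem qFibCoeff_succ_succ {q : ℝ} (hq : |q| ≠ 1) (k j : ℕ) :
    qFibCoeff q (k + 1) (j + 1) =
      qFibCoeff q (k + 1) j + (1 - q ^ (j + 2)) * qFibCoeff q k (j + 2) -
        qFibCoeff q k (j + 1) := by
  have hP := qPoch_self_ne_zero hq
  have h1 := fun n => sub_ne_zero.2 (pow_succ_ne_one_of_abs_ne_one hq n).symm
  simp only [qFibCoeff_eq, succ_mul_succ_add_one_div_two]
  rw [show k + 1 + (j + 1) = k + j + 1 + 1 by ring, show k + 1 + j = k + j + 1 by ring,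
    show k + (j + 2) = k + j + 1 + 1 by ring, show k + (j + 1) = k + j + 1 by ring,
    show j + 2 = j + 1 + 1 from rfl, qPoch_self_succ q (k + j + 1), qPoch_self_succ q k,
    qPoch_self_succ q (j + 1), qPoch_self_succ q j,
    pow_add q _ (k + 1), pow_succ (-1 : ℝ) k]
  field_simp [hP k, hP j, hP (k + j + 1), h1 k, h1 j, h1 (j + 1)]
  ring

noncomputable def qFib (q : ℝ) (n : ℕ) : ℝ[X] :=
  ∑ k ∈ range (n / 2 + 1),
    C (q ^ (k * (k + 1) / 2) * qbinom q (n - k) k * (-1) ^ k) * X ^ (n - 2 * k)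

theorem coeff_qFib_of_eq (q : ℝ) {n k i : ℕ} (h : n = 2 * k + i) :
    (qFib q n).coeff i = qFibCoeff q k i := by
  subst h
  rw [qFib, finsetSum_coeff, sum_eq_single_of_mem k (mem_range.2 (by omega))]
  · rw [coeff_C_mul_X_pow, if_pos (by omega), show 2 * k + i - k = k + i by omega, qFibCoeff]
  · intro b hb hbk
    rw [coeff_C_mul_X_pow, if_neg]
    have := mem_range.1 hb
    omega

theorem coeff_qFib_eq_zero (q : ℝ) {n i : ℕ} (h : ∀ k, n ≠ 2 * k + i) :
    (qFib q n).coeff i = 0 := by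
  rw [qFib, finsetSum_coeff]
  refine sum_eq_zero fun k hk => ?_
  rw [coeff_C_mul_X_pow, if_neg]
  have := mem_range.1 hk
  have := h k
  omega

theorem coeff_qFib_self {q : ℝ} (hq : |q| ≠ 1) (n : ℕ) : (qFib q n).coeff n = 1 := by
  simpa [qFibCoeff_zero_left hq] using coeff_qFib_of_eq q (k := 0) (n.zero_add.symm)

theorem qFib_add_two {q : ℝ} (hq : |q| ≠ 1) (n : ℕ) :
    qFib q (n + 2) = X * qFib q (n + 1) + C (1 - q) * qDeriv q (qFib q (n + 1)) - qFib q n := by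
  have hq1 : q ≠ 1 := fun h => hq (by simp [h])
  ext i
  rw [coeff_sub, coeff_add, coeff_C_one_sub_mul_qDeriv hq1]
  -- all four coefficients vanish unless `n + 2 - i` is even and nonnegative
  by_cases h : ∃ k, n + 2 = 2 * k + i
  · obtain ⟨_ | k, hk⟩ := h
    · obtain rfl : i = n + 2 := by omega
      rw [coeff_X_mul, coeff_qFib_self hq, coeff_qFib_self hq,
        coeff_qFib_eq_zero q (i := n + 2 + 1) (by omega),
        coeff_qFib_eq_zero q (i := n + 2) (by omega)]
      ring
    · rw [coeff_qFib_of_eq q (n := n + 2) (k := k + 1) hk,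
        coeff_qFib_of_eq q (n := n + 1) (k := k) (by omega),
        coeff_qFib_of_eq q (n := n) (k := k) (by omega)]
      cases i with
      | zero => rw [coeff_X_mul_zero, qFibCoeff_succ_zero hq]; ring
      | succ j =>
        rw [coeff_X_mul, coeff_qFib_of_eq q (n := n + 1) (k := k + 1) (by omega),
          qFibCoeff_succ_succ hq]
  · simp only [not_exists] at h
    rw [coeff_qFib_eq_zero q h,
      coeff_qFib_eq_zero q (i := i) (fun k => by have := h (k + 1); omega),
      coeff_qFib_eq_zero q (i := i + 1) (fun k => by have := h (k + 1); omega)]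
    cases i with
    | zero => simp
    | succ j =>
      rw [coeff_X_mul, coeff_qFib_eq_zero q (i := j) (fun k => by have := h k; omega)]
      simp

theorem curious_q_fib_operator_recurrence (q : ℝ) (hq0 : 0 < q) (hq1 : q < 1)
    (Dq : Polynomial ℝ → Polynomial ℝ)
    (hDq : ∀ p : Polynomial ℝ, Dq p =
      p.sum fun n a => Polynomial.C (a * ((1 - q ^ n) / (1 - q))) * Polynomial.X ^ (n - 1))
    (F : ℕ → Polynomial ℝ)
    (hF : ∀ n, F n = ∑ k ∈ Finset.range (n / 2 + 1),
      Polynomial.C (q ^ (k * (k + 1) / 2) * qbinom q (n - k) k * (-1 : ℝ) ^ k) *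
        Polynomial.X ^ (n - 2 * k)) :
    ∀ n, 2 ≤ n →
      F n = Polynomial.X * F (n - 1) + Polynomial.C (1 - q) * Dq (F (n - 1))
        - F (n - 2) := by
  obtain rfl : Dq = qDeriv q := funext hDq
  obtain rfl : F = qFib q := funext hF
  have hq : |q| ≠ 1 := by
    rw [abs_of_pos hq0]
    exact hq1.ne
  intro n hn
  obtain ⟨m, rfl⟩ := Nat.exists_eq_add_of_le' hn
  rw [show m + 2 - 1 = m + 1 by omega, Nat.add_sub_cancel]
  exact qFib_add_two hq m
end

section
/- For the q-Lucas type polynomials l_n(x,q) one has l_n(x,q) = Σ_{k=0}^{⌊n/2⌋} (-1)^k q^{C(k,2)} ([n]_q/[n-k]_q) [n-k choose k]_q x^{n-2k} for n ≥ 1, where l_n(x,q) := F_n(x,q) - F_{n-2}(x,q) for n ≥ 2, l_0=1, l_1=x. -/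
/-! Comparing the coefficients of `x ^ (n - 2k)` in `F n - F (n - 2)` with the closed form reduces
the theorem to the q-Pascal-type identity
`q ^ k [n-k choose k]_q + [n-1-k choose k-1]_q = [n]_q / [n-k]_q · [n-k choose k]_q`,
a rational identity in `q` once the Gaussian binomials are written via q-Pochhammer symbols. -/

section

variable {q : ℝ}

lemma qPoch_succ (n : ℕ) : qPoch q q (n + 1) = qPoch q q n * (1 - q ^ (n + 1)) := by
  rw [qPoch, Finset.prod_range_succ, ← pow_succ]
  rfl

lemma one_sub_pow_succ_ne_zero (hq : ∀ j, q ^ (j + 1) ≠ 1) (j : ℕ) : 1 - q ^ (j + 1) ≠ 0 :=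
  sub_ne_zero.mpr (hq j).symm

lemma qPoch_ne_zero (hq : ∀ j, q ^ (j + 1) ≠ 1) (n : ℕ) : qPoch q q n ≠ 0 :=
  Finset.prod_ne_zero_iff.mpr fun j _ => by
    rw [← pow_succ]
    exact one_sub_pow_succ_ne_zero hq j

lemma qbinom_zero_right (hq : ∀ j, q ^ (j + 1) ≠ 1) (n : ℕ) : qbinom q n 0 = 1 := by
  rw [qbinom, Nat.sub_zero, show qPoch q q 0 = 1 from Finset.prod_range_zero _, one_mul,
    div_self (qPoch_ne_zero hq n)]

lemma qint_div_qint (hq : ∀ j, q ^ (j + 1) ≠ 1) (m n : ℕ) :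
    ((1 - q ^ m) / (1 - q)) / ((1 - q ^ n) / (1 - q)) = (1 - q ^ m) / (1 - q ^ n) :=
  div_div_div_cancel_right₀ (by simpa using one_sub_pow_succ_ne_zero hq 0) _ _

lemma qbinom_lucas_pascal (hq : ∀ j, q ^ (j + 1) ≠ 1) (a b : ℕ) :
    q ^ (a + 1) * qbinom q (a + 1 + b) (a + 1) + qbinom q (a + b) a
      = (1 - q ^ (2 * a + 2 + b)) / (1 - q ^ (a + 1 + b)) * qbinom q (a + 1 + b) (a + 1) := by
  have hP := qPoch_ne_zero hq
  have hab := one_sub_pow_succ_ne_zero hq (a + b)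
  have ha := one_sub_pow_succ_ne_zero hq a
  rw [qbinom, qbinom, show a + 1 + b = a + b + 1 by omega, show a + b + 1 - (a + 1) = b by omega,
    show a + b - a = b by omega, qPoch_succ, qPoch_succ]
  field_simp [hP a, hP b, hP (a + b)]
  ring

end

theorem curious_q_lucas_closed_form_general (q : ℝ) (hq0 : 0 < q) (hq1 : q < 1)
    (F : ℕ → ℝ → ℝ)
    (hF : ∀ n x, F n x = ∑ k ∈ Finset.range (n / 2 + 1),
      q ^ (k * (k + 1) / 2) * qbinom q (n - k) k * (-1 : ℝ) ^ k * x ^ (n - 2 * k))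
    (l : ℕ → ℝ → ℝ)
    (hl1 : ∀ x, l 1 x = x)
    (hl : ∀ n x, l (n + 2) x = F (n + 2) x - F n x) :
    ∀ n, 1 ≤ n → ∀ x : ℝ,
      l n x = ∑ k ∈ Finset.range (n / 2 + 1),
        (-1 : ℝ) ^ k * q ^ (k * (k - 1) / 2) *
          (((1 - q ^ n) / (1 - q)) / ((1 - q ^ (n - k)) / (1 - q))) *
          qbinom q (n - k) k * x ^ (n - 2 * k) := by
  have hq : ∀ j, q ^ (j + 1) ≠ 1 := fun j => (pow_lt_one₀ hq0.le hq1 j.succ_ne_zero).ne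
  intro n hn x
  obtain rfl | ⟨m, rfl⟩ : n = 1 ∨ ∃ m, n = m + 2 := by
    rcases n with _ | _ | m <;> simp_all
  · rw [hl1, Finset.sum_range_one, qbinom_zero_right hq, qint_div_qint hq,
      div_self (one_sub_pow_succ_ne_zero hq 0)]
    ring
  rw [hl, hF, hF, show (m + 2) / 2 = m / 2 + 1 by omega, Finset.sum_range_succ',
    Finset.sum_range_succ' _ (m / 2 + 1), add_sub_right_comm, ← Finset.sum_sub_distrib]
  congr 1
  · refine Finset.sum_congr rfl fun a ha => ?_
    obtain ⟨b, rfl⟩ : ∃ b, m = 2 * a + b :=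
      Nat.exists_eq_add_of_le (by rw [Finset.mem_range] at ha; omega)
    rw [show 2 * a + b + 2 - (a + 1) = a + 1 + b by omega, show 2 * a + b - a = a + b by omega,
      show 2 * a + b + 2 - 2 * (a + 1) = b by omega, show 2 * a + b - 2 * a = b by omega,
      show 2 * a + b + 2 = 2 * a + 2 + b by omega, Nat.add_sub_cancel, qint_div_qint hq,
      show (a + 1) * (a + 1 + 1) / 2 = a * (a + 1) / 2 + (a + 1) by
        rw [← Nat.add_mul_div_left _ _ two_pos]; ring_nf,
      mul_comm (a + 1) a, pow_add]
    linear_combination (-1 : ℝ) ^ (a + 1) * q ^ (a * (a + 1) / 2) * x ^ b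
      * qbinom_lucas_pascal hq a b
  · simp [qbinom_zero_right hq, qint_div_qint hq, div_self (one_sub_pow_succ_ne_zero hq (m + 1))]

theorem curious_q_lucas_closed_form (q : ℝ) (hq0 : 0 < q) (hq1 : q < 1)
    (F : ℕ → ℝ → ℝ)
    (hF : ∀ n x, F n x = ∑ k ∈ Finset.range (n / 2 + 1),
      q ^ (k * (k + 1) / 2) * qbinom q (n - k) k * (-1 : ℝ) ^ k * x ^ (n - 2 * k))
    (l : ℕ → ℝ → ℝ)
    (hl0 : ∀ x, l 0 x = 1) (hl1 : ∀ x, l 1 x = x)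
    (hl : ∀ n x, l (n + 2) x = F (n + 2) x - F n x) :
    ∀ n, 1 ≤ n → ∀ x : ℝ,
      l n x = ∑ k ∈ Finset.range (n / 2 + 1),
        (-1 : ℝ) ^ k * q ^ (k * (k - 1) / 2) *
          (((1 - q ^ n) / (1 - q)) / ((1 - q ^ (n - k)) / (1 - q))) *
          qbinom q (n - k) k * x ^ (n - 2 * k) :=
  curious_q_lucas_closed_form_general q hq0 hq1 F hF l hl1 hl
end
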